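/- Let P_8 denote the path with 8 edges. Painter has a winning strategy in the deterministic P_8-avoidance game with 2 colors and tree size restriction 38; consequently k*(P_8,2) ≥ 39. A winning strategy for Painter is: color an edge blue if and only if it is adjacent to a red edge and coloring it blue does not complete a blue copy of P_8, and otherwise color it red. -/

import Mathlib

open SimpleGraph Filter Asymptotics
open scoped Classical

/-- A history of the game: the sequence of edges presented so far, together with
the colors (elements of `Fin r`, representing the colors `1,…,r`) they received. -/
abbrev EdgeHistory (V : Type) (r : ℕ) := List (Sym2 V × Fin r)

/-- A Painter strategy on vertex type `V` with `r` colors: a function assigning a color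
to every pair (history, new edge). -/
abbrev PainterStrategy (V : Type) (r : ℕ) := EdgeHistory V r → Sym2 V → Fin r

/-- Auxiliary function: run a Painter strategy on a list of presented edges,
extending the given history. -/
def runPainterAux {V : Type} {r : ℕ} (π : PainterStrategy V r) :
    EdgeHistory V r → List (Sym2 V) → EdgeHistory V r
  | h, [] => h
  | h, e :: es => runPainterAux π (h ++ [(e, π h e)]) es

/-- The colored history obtained by coloring the edges of `l` successively
according to the Painter strategy `π`. -/
def runPainter {V : Type} {r : ℕ} (π : PainterStrategy V r) (l : List (Sym2 V)) :
    EdgeHistory V r :=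
  runPainterAux π [] l

/-- `G` contains a copy of `F`, i.e. a subgraph isomorphic to `F`. -/
def IsCopy {α β : Type} (F : SimpleGraph α) (G : SimpleGraph β) : Prop :=
  ∃ f : α ↪ β, ∀ u v : α, F.Adj u v → G.Adj (f u) (f v)

/-- The graph formed by the edges of color `c` in the history `h`. -/
def colorGraph {V : Type} {r : ℕ} (h : EdgeHistory V r) (c : Fin r) : SimpleGraph V :=
  SimpleGraph.fromEdgeSet {e | (e, c) ∈ h}

/-- The history `h` contains a monochromatic copy of `F`. -/
def HasMonoCopy {α V : Type} {r : ℕ} (F : SimpleGraph α) (h : EdgeHistory V r) : Prop :=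
  ∃ c : Fin r, IsCopy F (colorGraph h c)

/-- The number of edges of `G` lying entirely within the vertex set `S`. -/
noncomputable def edgesWithin {V : Type} (G : SimpleGraph V) (S : Set V) : ℕ :=
  (G.edgeSet ∩ {e | ∀ v ∈ e, v ∈ S}).ncard

/-- `m(G) ≤ d`: every subgraph `H` of `G` with at least one vertex satisfies `e_H ≤ d · v_H`. -/
def DensityLE {V : Type} (G : SimpleGraph V) (d : ℝ) : Prop :=
  ∀ S : Finset V, S.Nonempty → (edgesWithin G (↑S : Set V) : ℝ) ≤ d * (S.card : ℝ)

/-- `G` contains no cycle and every connected component of `G` has at most `k` edges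
(equivalently, `G` is acyclic and contains no connected subgraph with more than `k` edges). -/
def TreeSizeLE {V : Type} (G : SimpleGraph V) (k : ℕ) : Prop :=
  G.IsAcyclic ∧ ∀ S : Set V, (G.induce S).Connected → edgesWithin G S ≤ k

/-- A legal sequence of moves for Builder: distinct non-loop edges. -/
def ValidEdgeSeq {V : Type} (l : List (Sym2 V)) : Prop :=
  l.Nodup ∧ ∀ e ∈ l, ¬ e.IsDiag

/-- The (uncolored) board formed by a list of edges. -/
def boardOf {V : Type} (l : List (Sym2 V)) : SimpleGraph V :=
  SimpleGraph.fromEdgeSet {e | e ∈ l}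

/-- Builder has a winning strategy in the deterministic `F`-avoidance game with `r` colors
and density restriction `d`. -/
def BuilderWinsDensity {α : Type} (F : SimpleGraph α) (r : ℕ) (d : ℝ) : Prop :=
  ∃ a : ℕ, ∀ π : PainterStrategy (Fin a) r, ∃ l : List (Sym2 (Fin a)),
    ValidEdgeSeq l ∧ (∀ i : ℕ, DensityLE (boardOf (l.take i)) d) ∧
    HasMonoCopy F (runPainter π l)

/-- Builder has a winning strategy in the deterministic `F`-avoidance game with `r` colors
and tree size restriction `k`. -/
def BuilderWinsTree {α : Type} (F : SimpleGraph α) (r k : ℕ) : Prop :=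
  ∃ a : ℕ, ∀ π : PainterStrategy (Fin a) r, ∃ l : List (Sym2 (Fin a)),
    ValidEdgeSeq l ∧ (∀ i : ℕ, TreeSizeLE (boardOf (l.take i)) k) ∧
    HasMonoCopy F (runPainter π l)

/-- The Painter strategy `π` on `a` vertices never creates a monochromatic copy of `F`
against any Builder play obeying the tree size restriction `k`. -/
def PainterAvoidsTree {α : Type} (F : SimpleGraph α) (r k a : ℕ)
    (π : PainterStrategy (Fin a) r) : Prop :=
  ∀ l : List (Sym2 (Fin a)), ValidEdgeSeq l →
    (∀ i : ℕ, TreeSizeLE (boardOf (l.take i)) k) →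
    ¬ HasMonoCopy F (runPainter π l)

/-- Painter has a winning strategy in the deterministic `F`-avoidance game with `r` colors
and tree size restriction `k`. -/
def PainterWinsTree {α : Type} (F : SimpleGraph α) (r k : ℕ) : Prop :=
  ∀ a : ℕ, ∃ π : PainterStrategy (Fin a) r, PainterAvoidsTree F r k a π

/-- A sequence of `N` distinct non-loop edges on `n` vertices. -/
def ValidSeqFun {n N : ℕ} (f : Fin N → Sym2 (Fin n)) : Prop :=
  Function.Injective f ∧ ∀ i, ¬ (f i).IsDiag

/-- The probability (with respect to the uniformly random order in which the `N` distinct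
edges of the random process on `n` vertices appear) of the event `P`. -/
noncomputable def onlineProb (n N : ℕ) (P : (Fin N → Sym2 (Fin n)) → Prop) : ℝ :=
  (Set.ncard {f : Fin N → Sym2 (Fin n) | ValidSeqFun f ∧ P f} : ℝ) /
  (Set.ncard {f : Fin N → Sym2 (Fin n) | ValidSeqFun f} : ℝ)

/-- Event: playing the online strategy `π` on the random edge sequence `f` produces
a monochromatic copy of `F`. -/
def OnlineMonoCopy {α : Type} (F : SimpleGraph α) {r n N : ℕ}
    (π : PainterStrategy (Fin n) r) (f : Fin N → Sym2 (Fin n)) : Prop :=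
  HasMonoCopy F (runPainter π (List.ofFn f))

/-- The Painter strategy (colors: `0` = red, `1` = blue): color an edge blue if and only if
it is adjacent to a red edge and coloring it blue does not complete a blue copy of the path
`P_ℓ` with `ℓ` edges; otherwise color it red. -/
noncomputable def blueIfSafeStrategy (ℓ n : ℕ) : PainterStrategy (Fin n) 2 := fun h e =>
  if (∃ e', (e', (0 : Fin 2)) ∈ h ∧ ∃ v, v ∈ e ∧ v ∈ e') ∧
      ¬ IsCopy (SimpleGraph.pathGraph (ℓ + 1))
        (SimpleGraph.fromEdgeSet (insert e {e' | (e', (1 : Fin 2)) ∈ h}))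
  then 1 else 0

/-! Suppose the strategy produced a red `P_ℓ` with vertices `v 0, …, v ℓ` on a board whose
components are trees with at most `k` edges. Deleting the path edges leaves a branch hanging at
each `v j`; if `w j` is its number of edges then `ℓ + ∑ w j ≤ k`. Of two consecutive path edges
the later one meets the earlier, red one, so it was coloured red only because it would have
completed a blue `P_ℓ`: it has blue paths with `a` and `ℓ - 1 - a` edges, all presented before
it, at its two ends. Every blue edge meets an older red edge. For a blue path starting at `v j`
these red edges lie in the branch at `v j`, except possibly the other path edge at `v j`, and in
a forest distinct path vertices get distinct ones; so a blue path with `d` edges forces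
`w j ≥ d + ⌈d / 2⌉`, or `w j ≥ d + ⌊d / 2⌋` if the other path edge at `v j` is older.
Minimising `∑ w j` subject to these constraints is a small dynamic programme whose value for
`ℓ = 8` is `31 > 38 - 8`. A blue `P_ℓ` cannot occur either, since its last edge would have
completed it. -/

section Paths

variable {V : Type}

def IsPathIn (W : Set (Sym2 V)) (u : ℕ → V) (d : ℕ) : Prop :=
  Set.InjOn u (Set.Iic d) ∧ ∀ k < d, s(u k, u (k + 1)) ∈ W

def pathEdges (u : ℕ → V) (d : ℕ) : Set (Sym2 V) := (fun k ↦ s(u k, u (k + 1))) '' Set.Iio d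

variable {W W' : Set (Sym2 V)} {u : ℕ → V} {d : ℕ}

theorem IsPathIn.mono (hu : IsPathIn W u d) (hW : W ⊆ W') : IsPathIn W' u d :=
  ⟨hu.1, fun k hk ↦ hW (hu.2 k hk)⟩

theorem IsPathIn.pathEdges_subset (hu : IsPathIn W u d) : pathEdges u d ⊆ W := by
  rintro _ ⟨k, hk, rfl⟩
  exact hu.2 k hk

theorem IsPathIn.eq_of_mem {i j : ℕ} (hu : IsPathIn W u d) (hi : i ≤ d) (hj : j ≤ d)
    (h : u i = u j) : i = j :=
  hu.1 (Set.mem_Iic.2 hi) (Set.mem_Iic.2 hj) h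

theorem IsPathIn.mem_edge_iff {i j : ℕ} (hu : IsPathIn W u d) (hi : i < d) (hj : j ≤ d) :
    u j ∈ s(u i, u (i + 1)) ↔ j = i ∨ j = i + 1 := by
  rw [Sym2.mem_iff]
  constructor
  · rintro (h | h)
    · exact .inl (hu.eq_of_mem hj hi.le h)
    · exact .inr (hu.eq_of_mem hj hi h)
  · rintro (rfl | rfl) <;> simp

theorem IsPathIn.edge_injOn (hu : IsPathIn W u d) :
    Set.InjOn (fun k ↦ s(u k, u (k + 1))) (Set.Iio d) := by
  intro i hi j hj h
  simp only [Set.mem_Iio] at hi hj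
  rcases Sym2.eq_iff.1 h with ⟨h1, -⟩ | ⟨h1, h2⟩
  · exact hu.eq_of_mem hi.le hj.le h1
  · have := hu.eq_of_mem hi.le hj h1
    have := hu.eq_of_mem hi hj.le h2
    omega

theorem IsPathIn.ncard_pathEdges (hu : IsPathIn W u d) : (pathEdges u d).ncard = d := by
  rw [pathEdges, hu.edge_injOn.ncard_image, ← Finset.coe_range,
    Set.ncard_coe_finset, Finset.card_range]

theorem isCopy_pathGraph_iff :
    IsCopy (pathGraph (d + 1)) (fromEdgeSet W) ↔ ∃ u, IsPathIn W u d := by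
  constructor
  · rintro ⟨f, hf⟩
    refine ⟨fun k ↦ f ⟨min k d, by omega⟩, fun i hi j hj h ↦ ?_, fun k hk ↦ ?_⟩
    · simpa [min_eq_left (Set.mem_Iic.1 hi), min_eq_left (Set.mem_Iic.1 hj)] using f.injective h
    · have := hf ⟨k, by omega⟩ ⟨k + 1, by omega⟩ (pathGraph_adj.2 (.inl rfl))
      simpa [min_eq_left hk.le, min_eq_left (Nat.succ_le_of_lt hk)] using this.1
  · rintro ⟨u, hinj, hW⟩
    refine ⟨⟨fun i ↦ u i, fun i j h ↦ Fin.ext (hinj (Set.mem_Iic.2 (by omega))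
      (Set.mem_Iic.2 (by omega)) h)⟩, fun i j hij ↦ ?_⟩
    refine (fromEdgeSet_adj _).2 ⟨?_, fun h ↦ (pathGraph _).ne_of_adj hij
      (Fin.ext (hinj (Set.mem_Iic.2 (by omega)) (Set.mem_Iic.2 (by omega)) h))⟩
    show s(u i, u j) ∈ W
    rcases pathGraph_adj.1 hij with h | h
    · simpa [← h] using hW i (by omega)
    · simpa [← h, Sym2.eq_swap] using hW j (by omega)

theorem IsPathIn.exists_split {x y : V} {ℓ : ℕ} (hu : IsPathIn (insert s(x, y) W) u ℓ)
    (hW : ¬ ∃ u, IsPathIn W u ℓ) :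
    ∃ a b, a + b + 1 = ℓ ∧ (∃ u, u 0 = x ∧ IsPathIn W u a) ∧ (∃ u, u 0 = y ∧ IsPathIn W u b) := by
  obtain ⟨k, hk, hke⟩ : ∃ k < ℓ, s(u k, u (k + 1)) = s(x, y) := by
    by_contra! h
    exact hW ⟨u, hu.1, fun k hk ↦ (hu.2 k hk).resolve_left (h k hk)⟩
  have hW' : ∀ j < ℓ, j ≠ k → s(u j, u (j + 1)) ∈ W := fun j hj hjk ↦
    (hu.2 j hj).resolve_left fun h ↦ hjk (hu.edge_injOn hj hk (h.trans hke.symm))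
  have hleft : IsPathIn W (fun i ↦ u (k - i)) k := by
    refine ⟨fun i hi j hj h ↦ ?_, fun i hi ↦ ?_⟩
    · have := hu.eq_of_mem (i := k - i) (j := k - j) (by omega) (by omega) h
      simp only [Set.mem_Iic] at hi hj
      omega
    · have := hW' (k - (i + 1)) (by omega) (by omega)
      rwa [show k - (i + 1) + 1 = k - i by omega, Sym2.eq_swap] at this
  have hright : IsPathIn W (fun i ↦ u (k + 1 + i)) (ℓ - 1 - k) := by
    refine ⟨fun i hi j hj h ↦ ?_, fun i hi ↦ ?_⟩
    · simp only [Set.mem_Iic] at hi hj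
      have := hu.eq_of_mem (i := k + 1 + i) (j := k + 1 + j) (by omega) (by omega) h
      omega
    · simpa [← add_assoc] using hW' (k + 1 + i) (by omega) (by omega)
  rcases Sym2.eq_iff.1 hke with ⟨rfl, rfl⟩ | ⟨rfl, rfl⟩
  · exact ⟨k, ℓ - 1 - k, by omega, ⟨_, by simp, hleft⟩, ⟨_, by simp, hright⟩⟩
  · exact ⟨ℓ - 1 - k, k, by omega, ⟨_, by simp, hright⟩, ⟨_, by simp, hleft⟩⟩

theorem reachable_of_forall_adj {H : SimpleGraph V} {p q : ℕ} (hpq : p ≤ q)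
    (h : ∀ k, p ≤ k → k < q → H.Adj (u k) (u (k + 1))) : H.Reachable (u p) (u q) := by
  induction q, hpq using Nat.le_induction with
  | base => rfl
  | succ q hpq ih =>
    exact (ih fun k hk hkq ↦ h k hk (by omega)).trans (h q hpq (by omega)).reachable

def pathBranch (G : SimpleGraph V) (v : ℕ → V) (d j : ℕ) : Set V :=
  {x | (G.deleteEdges (pathEdges v d)).Reachable (v j) x}

theorem SimpleGraph.IsAcyclic.not_mem_pathBranch {G : SimpleGraph V} (hG : G.IsAcyclic)
    (hu : IsPathIn G.edgeSet u d) {i j : ℕ} (hi : i ≤ d) (hj : j ≤ d) (hij : i ≠ j) :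
    u i ∉ pathBranch G u d j := by
  wlog hlt : j < i generalizing i j
  · exact fun h ↦ this hj hi hij.symm (by omega) h.symm
  intro hreach
  refine (isBridge_iff.1 (isAcyclic_iff_forall_adj_isBridge.1 hG (hu.2 j (by omega)))) ?_
  have hle : G.deleteEdges (pathEdges u d) ≤ G.deleteEdges {s(u j, u (j + 1))} :=
    deleteEdges_anti (by simpa using ⟨j, by simp; omega, rfl⟩)
  refine (hreach.mono hle).trans (reachable_of_forall_adj (by omega) fun m hm hmk ↦ ?_).symm
  refine deleteEdges_adj.2 ⟨hu.2 m (by omega), fun h ↦ ?_⟩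
  have := hu.edge_injOn (by simp; omega) (by simp; omega) (Set.mem_singleton_iff.1 h)
  omega

end Paths

def demand (strong : Bool) (d : ℕ) : ℕ := d + (d + strong.toNat) / 2

theorem le_card_of_meets_pairs (A : Finset ℕ) (c n : ℕ)
    (h : ∀ i < n, c + 2 * i ∈ A ∨ c + 2 * i + 1 ∈ A) : n ≤ A.card := by
  classical
  let f i := if c + 2 * i ∈ A then c + 2 * i else c + 2 * i + 1
  have hmaps : Set.MapsTo f (Finset.range n) A := by
    intro i hi
    have := h i (by simpa using hi)
    by_cases hA : c + 2 * i ∈ A <;> simp_all [f]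
  have hinj : Set.InjOn f (Finset.range n) := by
    intro i _ j _ hij
    simp only [f] at hij
    split_ifs at hij <;> omega
  simpa using Finset.card_le_card_of_injOn f hmaps hinj

section Forest

variable {V : Type} {G : SimpleGraph V}

theorem SimpleGraph.IsAcyclic.add_card_le_edgesWithin [Finite V] (hG : G.IsAcyclic)
    {R B : Set (Sym2 V)} (hR : R ⊆ G.edgeSet) (hB : B ⊆ G.edgeSet) (hRB : Disjoint R B)
    {C : Set V} {u : ℕ → V} {d : ℕ} (hu : IsPathIn B u d) (huC : ∀ k ≤ d, u k ∈ C) {A : Finset ℕ}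
    (hA : ∀ k ∈ A, k ≤ d ∧ ∃ e ∈ R, u k ∈ e ∧ ∀ z ∈ e, z ∈ C) :
    d + A.card ≤ edgesWithin G C := by
  have : Nonempty (Sym2 V) := ⟨s(u 0, u 0)⟩
  choose! f hfR hfu hfC using fun k (hk : k ∈ A) ↦ (hA k hk).2
  have hdisj : Disjoint (pathEdges u d) (f '' A) :=
    Set.disjoint_of_subset hu.pathEdges_subset (by rintro _ ⟨k, hk, rfl⟩; exact hfR k hk) hRB.symm
  have hinj : Set.InjOn f A := by
    intro i hi j hj hij
    by_contra hne
    have hij' : u i ≠ u j := fun h ↦ hne (hu.eq_of_mem (hA i hi).1 (hA j hj).1 h)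
    have he : f i = s(u i, u j) := (Sym2.mem_and_mem_iff hij').1 ⟨hfu i hi, hij ▸ hfu j hj⟩
    refine hG.not_mem_pathBranch (hu.mono hB) (hA j hj).1 (hA i hi).1 (Ne.symm hne) ?_
    refine (deleteEdges_adj.2 ⟨?_, fun h ↦ Set.disjoint_left.1 hdisj h ⟨i, hi, he⟩⟩).reachable
    exact (mem_edgeSet G).1 (he ▸ hR (hfR i hi))
  have hsub : pathEdges u d ∪ f '' A ⊆ G.edgeSet ∩ {e | ∀ z ∈ e, z ∈ C} := by
    rintro _ (⟨k, hk, rfl⟩ | ⟨k, hk, rfl⟩)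
    · refine ⟨hB (hu.2 k hk), fun z hz ↦ ?_⟩
      rcases Sym2.mem_iff.1 hz with rfl | rfl <;> exact huC _ (by simp at hk; omega)
    · exact ⟨hR (hfR k hk), hfC k hk⟩
  calc d + A.card = (pathEdges u d ∪ f '' A).ncard := by
        rw [Set.ncard_union_eq hdisj, hu.ncard_pathEdges, hinj.ncard_image, Set.ncard_coe_finset]
    _ ≤ edgesWithin G C := Set.ncard_le_ncard hsub (Set.toFinite _)

def MeetsEarlier (R : Set (Sym2 V)) (τ : Sym2 V → ℕ) (e : Sym2 V) : Prop :=
  ∃ e' ∈ R, τ e' < τ e ∧ ∃ x, x ∈ e ∧ x ∈ e'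

theorem SimpleGraph.IsAcyclic.demand_le_edgesWithin [Finite V] (hG : G.IsAcyclic)
    {R B : Set (Sym2 V)} (hR : R ⊆ G.edgeSet) (hB : B ⊆ G.edgeSet) (hRB : Disjoint R B)
    {τ : Sym2 V → ℕ} (hblue : ∀ e ∈ B, MeetsEarlier R τ e) {C : Set V} {u : ℕ → V} {d T : ℕ}
    (hu : IsPathIn B u d) (huT : ∀ k < d, τ s(u k, u (k + 1)) < T) (huC : ∀ k ≤ d, u k ∈ C)
    {strong : Bool} (hesc : ∀ e ∈ R, τ e < T → ∀ z ∈ e, z ∈ C →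
      (∀ z' ∈ e, z' ∈ C) ∨ (strong = false ∧ z = u 0)) :
    demand strong d ≤ edgesWithin G C := by
  classical
  let A := (Finset.range (d + 1)).filter fun k ↦ ∃ e ∈ R, u k ∈ e ∧ ∀ z ∈ e, z ∈ C
  have hcover : ∀ k < d, (strong = true ∨ k ≠ 0) → k ∈ A ∨ k + 1 ∈ A := by
    intro k hk hk0
    obtain ⟨e, heR, hτe, x, hxk, hxe⟩ := hblue _ (hu.2 k hk)
    have hx : x = u k ∨ x = u (k + 1) := Sym2.mem_iff.1 hxk
    have hxC : x ∈ C := by rcases hx with rfl | rfl <;> exact huC _ (by omega)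
    rcases hesc e heR (hτe.trans (huT k hk)) x hxe hxC with hin | ⟨hs, rfl⟩
    · rcases hx with rfl | rfl
      · exact .inl (Finset.mem_filter.2 ⟨by simp; omega, e, heR, hxe, hin⟩)
      · exact .inr (Finset.mem_filter.2 ⟨by simp; omega, e, heR, hxe, hin⟩)
    · rcases hx with h | h
      · obtain rfl : k = 0 := hu.eq_of_mem (by omega) (by omega) h.symm
        simp [hs] at hk0
      · have := hu.eq_of_mem (by omega) (by omega) h
        omega
  have hpairs := le_card_of_meets_pairs A (1 - strong.toNat) ((d + strong.toNat) / 2)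
    fun i hi ↦ by cases strong <;> simpa using hcover _ (by simp at hi ⊢; omega) (by simp)
  have hcount := hG.add_card_le_edgesWithin hR hB hRB hu huC (A := A) fun k hk ↦ by
    simp only [A, Finset.mem_filter, Finset.mem_range] at hk
    exact ⟨by omega, hk.2⟩
  unfold demand
  omega

theorem IsPathIn.mem_pathBranch {W : Set (Sym2 V)} {u v : ℕ → V} {a d j : ℕ}
    (hu : IsPathIn W u a) (hWG : W ⊆ G.edgeSet) (hW : Disjoint W (pathEdges v d))
    (hu0 : u 0 = v j) {k : ℕ} (hk : k ≤ a) : u k ∈ pathBranch G v d j := by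
  have := reachable_of_forall_adj (H := G.deleteEdges (pathEdges v d)) (Nat.zero_le k)
    fun m _ hm ↦ deleteEdges_adj.2 ⟨hWG (hu.2 m (by omega)),
      Set.disjoint_left.1 hW (hu.2 m (by omega))⟩
  rwa [hu0] at this

theorem SimpleGraph.IsAcyclic.eq_of_escapes_pathBranch (hG : G.IsAcyclic) {v : ℕ → V} {d j : ℕ}
    (hv : IsPathIn G.edgeSet v d) (hj : j ≤ d) {e : Sym2 V} (he : e ∈ G.edgeSet) {z : V}
    (hz : z ∈ e) (hzj : z ∈ pathBranch G v d j) (hout : ¬ ∀ z' ∈ e, z' ∈ pathBranch G v d j) :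
    z = v j ∧ ∃ i < d, e = s(v i, v (i + 1)) := by
  obtain ⟨i, hi, rfl⟩ : e ∈ pathEdges v d := by
    refine not_not.1 fun hPE ↦ hout fun z' hz' ↦ ?_
    by_cases hzz : z = z'
    · exact hzz ▸ hzj
    have hez : e = s(z, z') := (Sym2.mem_and_mem_iff hzz).1 ⟨hz, hz'⟩
    exact hzj.trans (deleteEdges_adj.2 ⟨(mem_edgeSet G).1 (hez ▸ he), hez ▸ hPE⟩).reachable
  refine ⟨?_, i, hi, rfl⟩
  have hsep := fun m (hm : m ≤ d) (h : v m ∈ pathBranch G v d j) ↦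
    not_not.1 fun hmj ↦ hG.not_mem_pathBranch hv hm hj hmj h
  rw [Set.mem_Iio] at hi
  rcases Sym2.mem_iff.1 hz with rfl | rfl
  · rw [hsep i (by omega) hzj]
  · rw [hsep (i + 1) (by omega) hzj]

theorem SimpleGraph.IsAcyclic.add_sum_edgesWithin_pathBranch_le [Finite V] (hG : G.IsAcyclic)
    {v : ℕ → V} {d : ℕ} (hv : IsPathIn G.edgeSet v d) {S : Set V}
    (hS : ∀ j ≤ d, pathBranch G v d j ⊆ S) :
    d + ∑ j ∈ Finset.range (d + 1), edgesWithin G (pathBranch G v d j) ≤ edgesWithin G S := by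
  let T j := G.edgeSet ∩ {e | ∀ z ∈ e, z ∈ pathBranch G v d j}
  have hdisj : (↑(Finset.range (d + 1)) : Set ℕ).PairwiseDisjoint T := by
    intro i hi j hj hij
    refine Set.disjoint_left.2 fun e hei hej ↦ ?_
    have := (hei.2 _ e.out_fst_mem).trans (hej.2 _ e.out_fst_mem).symm
    exact hG.not_mem_pathBranch hv (by simp at hj; omega) (by simp at hi; omega) hij.symm this
  have hPE : Disjoint (pathEdges v d) (⋃ j ∈ (↑(Finset.range (d + 1)) : Set ℕ), T j) := by
    refine Set.disjoint_left.2 ?_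
    rintro _ ⟨k, hk, rfl⟩ hT
    obtain ⟨j, hj, hkj⟩ := Set.mem_iUnion₂.1 hT
    have h := (hkj.2 _ (Sym2.mem_mk_left _ _)).symm.trans (hkj.2 _ (Sym2.mem_mk_right _ _))
    exact hG.not_mem_pathBranch hv (i := k + 1) (by simp at hk; omega) (by simp at hk; omega)
      (by omega) h
  have hsub : pathEdges v d ∪ ⋃ j ∈ (↑(Finset.range (d + 1)) : Set ℕ), T j ⊆
      G.edgeSet ∩ {e | ∀ z ∈ e, z ∈ S} := by
    rintro _ (⟨k, hk, rfl⟩ | hT)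
    · simp only [Set.mem_Iio] at hk
      refine ⟨hv.2 k hk, fun z hz ↦ ?_⟩
      rcases Sym2.mem_iff.1 hz with rfl | rfl
      · exact hS k (by omega) (Reachable.refl _)
      · exact hS (k + 1) (by omega) (Reachable.refl _)
    · obtain ⟨j, hj, he⟩ := Set.mem_iUnion₂.1 hT
      exact ⟨he.1, fun z hz ↦ hS j (by simp at hj; omega) (he.2 z hz)⟩
  calc d + ∑ j ∈ Finset.range (d + 1), edgesWithin G (pathBranch G v d j)
      = (pathEdges v d ∪ ⋃ j ∈ (↑(Finset.range (d + 1)) : Set ℕ), T j).ncard := by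
        rw [Set.ncard_union_eq hPE, hv.ncard_pathEdges, Set.Finite.ncard_biUnion
          (Finset.finite_toSet _) (fun _ _ ↦ Set.toFinite _) hdisj, finsum_mem_coe_finset]
        rfl
    _ ≤ edgesWithin G S := Set.ncard_le_ncard hsub (Set.toFinite _)

theorem TreeSizeLE.add_sum_edgesWithin_pathBranch_le [Finite V] {k : ℕ} (hG : TreeSizeLE G k)
    {v : ℕ → V} {d : ℕ} (hv : IsPathIn G.edgeSet v d) :
    d + ∑ j ∈ Finset.range (d + 1), edgesWithin G (pathBranch G v d j) ≤ k := by
  refine (hG.1.add_sum_edgesWithin_pathBranch_le hv (S := (G.connectedComponentMk (v 0)).supp)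
    fun j hj x hx ↦ ?_).trans (hG.2 _ (ConnectedComponent.maximal_connected_induce_supp _).prop)
  have hj : G.Reachable (v 0) (v j) :=
    reachable_of_forall_adj (Nat.zero_le j) fun m _ hm ↦ hv.2 m (by omega)
  exact ConnectedComponent.eq.2 (hj.trans (hx.mono (deleteEdges_le _))).symm

end Forest

/-- Dynamic programme for the least possible `w 0 + ⋯ + w n` under the constraints of
`minWeight_le_sum`, processed edge by edge: `p` is the demand already placed on vertex `0`, `c` is
`early 0`, and `skip` says whether edge `0` may be left unselected. -/
def minWeight (m : ℕ) : ℕ → Bool → Bool → ℕ → ℕ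
  | 0, _, _, p => p
  | n + 1, skip, c, p =>
    (((if n = 0 then [true] else [false, true]).flatMap fun c' =>
      (if skip then [p + minWeight m n false c' 0] else []) ++
      (List.range (m + 1)).map fun a =>
        max p (demand (!c) a) + minWeight m n true c' (demand c' (m - a))).min?).getD 0

theorem minWeight_le_sum (m n : ℕ) (w : ℕ → ℕ) (early : ℕ → Bool) (s : ℕ → Prop)
    (skip : Bool) (p : ℕ) (hcover : ∀ i, i + 1 < n → s i ∨ s (i + 1))
    (hdemand : ∀ i < n, s i → ∃ a ≤ m,
      demand (!early i) a ≤ w i ∧ demand (early (i + 1)) (m - a) ≤ w (i + 1))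
    (hend : early n = true) (hskip : skip = false → n ≠ 0 → s 0) (hp : p ≤ w 0) :
    minWeight m n skip (early 0) p ≤ ∑ j ∈ Finset.range (n + 1), w j := by
  induction n generalizing w early s skip p with
  | zero => simpa [minWeight] using hp
  | succ n ih =>
    have ih' := fun skip p ↦ ih (w ∘ Nat.succ) (early ∘ Nat.succ) (s ∘ Nat.succ) skip p
      (fun i hi ↦ hcover (i + 1) (by omega)) (fun i hi ↦ hdemand (i + 1) (by omega)) hend
    have hc : early 1 ∈ (if n = 0 then [true] else [false, true]) := by
      split_ifs with hn
      · simp [← hend, hn]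
      · cases early 1 <;> simp
    rw [minWeight.eq_2, Finset.sum_range_succ', add_comm _ (w 0)]
    by_cases hs : s 0
    · obtain ⟨a, ha, hleft, hright⟩ := hdemand 0 (by omega) hs
      refine (List.min?_getD_le_of_mem (a := max p (demand (!early 0) a) +
        minWeight m n true (early 1) (demand (early 1) (m - a))) ?_).trans
        (add_le_add (max_le hp hleft) (ih' true _ (by simp) hright))
      exact List.mem_flatMap.2 ⟨early 1, hc, List.mem_append_right _
        (List.mem_map.2 ⟨a, List.mem_range.2 (by omega), rfl⟩)⟩
    · obtain rfl : skip = true := by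
        by_contra h
        exact hs (hskip (by simpa using h) (by omega))
      have hnext := ih' false 0 (fun _ _ ↦ (hcover 0 (by omega)).resolve_left hs) (Nat.zero_le _)
      refine (List.min?_getD_le_of_mem (a := p + minWeight m n false (early 1) 0) ?_).trans
        (add_le_add hp hnext)
      exact List.mem_flatMap.2 ⟨early 1, hc, List.mem_append_left _ (by simp)⟩

set_option maxRecDepth 2000 in
theorem minWeight_path8 : minWeight 7 8 true false 0 = 31 := by decide

section Coloring

variable {V : Type} {ℓ : ℕ} {G : SimpleGraph V} {R B : Set (Sym2 V)} {τ : Sym2 V → ℕ}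

def CompletesPath (ℓ : ℕ) (B : Set (Sym2 V)) (τ : Sym2 V → ℕ) (e : Sym2 V) : Prop :=
  ∃ u, IsPathIn (insert e {b ∈ B | τ b < τ e}) u ℓ

/-- `v ℓ` has no path edge on its right, so it counts as left-earlier. -/
def leftEarlier (τ : Sym2 V → ℕ) (v : ℕ → V) (ℓ j : ℕ) : Bool :=
  decide (j = ℓ ∨ j ≠ 0 ∧ τ s(v (j - 1), v j) < τ s(v j, v (j + 1)))

/-- The final colouring produced by the strategy, `τ e` being the time at which `e` was
presented. -/
structure IsBlueIfSafeColoring (ℓ : ℕ) (G : SimpleGraph V) (R B : Set (Sym2 V))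
    (τ : Sym2 V → ℕ) : Prop where
  red_subset : R ⊆ G.edgeSet
  blue_subset : B ⊆ G.edgeSet
  disjoint : Disjoint R B
  injOn : Set.InjOn τ (R ∪ B)
  mem_blue_iff : ∀ e ∈ R ∪ B, e ∈ B ↔
    MeetsEarlier R τ e ∧ ¬ CompletesPath ℓ B τ e

namespace IsBlueIfSafeColoring

theorem meetsEarlier (hc : IsBlueIfSafeColoring ℓ G R B τ) {e : Sym2 V} (he : e ∈ B) :
    MeetsEarlier R τ e :=
  ((hc.mem_blue_iff e (.inr he)).1 he).1

theorem completesPath (hc : IsBlueIfSafeColoring ℓ G R B τ) {e : Sym2 V} (he : e ∈ R)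
    (hm : MeetsEarlier R τ e) : CompletesPath ℓ B τ e := by
  by_contra h
  exact Set.disjoint_left.1 hc.disjoint he ((hc.mem_blue_iff e (.inl he)).2 ⟨hm, h⟩)

theorem not_isPathIn_blue (hc : IsBlueIfSafeColoring ℓ G R B τ) (hℓ : ℓ ≠ 0) (u : ℕ → V) :
    ¬ IsPathIn B u ℓ := by
  intro hu
  obtain ⟨k, hk, hmax⟩ := Finset.exists_max_image (Finset.range ℓ)
    (fun k ↦ τ s(u k, u (k + 1))) (by simp; omega)
  have heB : s(u k, u (k + 1)) ∈ B := hu.2 k (by simpa using hk)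
  refine ((hc.mem_blue_iff _ (.inr heB)).1 heB).2 ⟨u, hu.1, fun j hj ↦ ?_⟩
  by_cases hje : s(u j, u (j + 1)) = s(u k, u (k + 1))
  · exact .inl hje
  · refine .inr ⟨hu.2 j hj, (hmax j (by simpa using hj)).lt_of_ne fun h ↦ hje ?_⟩
    exact hc.injOn (.inr (hu.2 j hj)) (.inr heB) h

theorem completesPath_or_completesPath (hc : IsBlueIfSafeColoring ℓ G R B τ) {v : ℕ → V}
    (hv : IsPathIn R v ℓ) {i : ℕ} (hi : i + 1 < ℓ) :
    CompletesPath ℓ B τ s(v i, v (i + 1)) ∨ CompletesPath ℓ B τ s(v (i + 1), v (i + 1 + 1)) := by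
  have hne : τ s(v i, v (i + 1)) ≠ τ s(v (i + 1), v (i + 1 + 1)) := fun h ↦ by
    have := hv.edge_injOn (Set.mem_Iio.2 (by omega)) (Set.mem_Iio.2 hi)
      (hc.injOn (.inl (hv.2 i (by omega))) (.inl (hv.2 (i + 1) hi)) h)
    omega
  rcases hne.lt_or_gt with h | h
  · exact .inr (hc.completesPath (hv.2 (i + 1) hi)
      ⟨_, hv.2 i (by omega), h, v (i + 1), Sym2.mem_mk_left _ _, Sym2.mem_mk_right _ _⟩)
  · exact .inl (hc.completesPath (hv.2 i (by omega))
      ⟨_, hv.2 (i + 1) hi, h, v (i + 1), Sym2.mem_mk_right _ _, Sym2.mem_mk_left _ _⟩)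

theorem demand_le_edgesWithin_pathBranch [Finite V] (hc : IsBlueIfSafeColoring ℓ G R B τ)
    (hG : G.IsAcyclic) {v : ℕ → V} (hv : IsPathIn R v ℓ) {i j a : ℕ} (hj : j ≤ ℓ) {u : ℕ → V}
    (hu : IsPathIn {b ∈ B | τ b < τ s(v i, v (i + 1))} u a) (hu0 : u 0 = v j) {strong : Bool}
    (hstrong : strong = true → ∀ i' < ℓ, v j ∈ s(v i', v (i' + 1)) →
      ¬ τ s(v i', v (i' + 1)) < τ s(v i, v (i + 1))) :
    demand strong a ≤ edgesWithin G (pathBranch G v ℓ j) := by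
  have hvG := hv.mono hc.red_subset
  have hsep : Disjoint {b ∈ B | τ b < τ s(v i, v (i + 1))} (pathEdges v ℓ) :=
    Set.disjoint_of_subset (Set.sep_subset _ _) hv.pathEdges_subset hc.disjoint.symm
  refine hG.demand_le_edgesWithin hc.red_subset hc.blue_subset hc.disjoint
    (fun e he ↦ hc.meetsEarlier he) (hu.mono (Set.sep_subset _ _)) (fun k hk ↦ (hu.2 k hk).2)
    (fun k hk ↦ hu.mem_pathBranch ((Set.sep_subset _ _).trans hc.blue_subset) hsep hu0 hk) ?_
  intro e heR hτe z hz hzj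
  refine or_iff_not_imp_left.2 fun hout ↦ ?_
  obtain ⟨rfl, i', hi', rfl⟩ := hG.eq_of_escapes_pathBranch hvG hj (hc.red_subset heR) hz hzj hout
  cases strong
  · exact ⟨rfl, hu0.symm⟩
  · exact (hstrong rfl i' hi' hz hτe).elim

theorem exists_demand_le [Finite V] (hc : IsBlueIfSafeColoring ℓ G R B τ) (hG : G.IsAcyclic)
    {v : ℕ → V} (hv : IsPathIn R v ℓ) {i : ℕ} (hi : i < ℓ)
    (hcomp : CompletesPath ℓ B τ s(v i, v (i + 1))) :
    ∃ a ≤ ℓ - 1, demand (!leftEarlier τ v ℓ i) a ≤ edgesWithin G (pathBranch G v ℓ i) ∧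
      demand (leftEarlier τ v ℓ (i + 1)) (ℓ - 1 - a) ≤
        edgesWithin G (pathBranch G v ℓ (i + 1)) := by
  obtain ⟨u, hu⟩ := hcomp
  have hfree : ¬ ∃ u, IsPathIn {b ∈ B | τ b < τ s(v i, v (i + 1))} u ℓ := fun ⟨u, hu⟩ ↦
    hc.not_isPathIn_blue (by omega) u (hu.mono (Set.sep_subset _ _))
  obtain ⟨a, b, hab, ⟨u₁, hu₁0, hu₁⟩, ⟨u₂, hu₂0, hu₂⟩⟩ := hu.exists_split hfree
  refine ⟨a, by omega, hc.demand_le_edgesWithin_pathBranch hG hv hi.le hu₁ hu₁0 ?_, ?_⟩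
  · intro hs i' hi' hmem hlt
    rcases (hv.mem_edge_iff hi' hi.le).1 hmem with rfl | rfl
    · exact lt_irrefl _ hlt
    · simp [leftEarlier, hlt] at hs
  · rw [show ℓ - 1 - a = b by omega]
    refine hc.demand_le_edgesWithin_pathBranch hG hv hi hu₂ hu₂0 fun hs i' hi' hmem hlt ↦ ?_
    rcases (hv.mem_edge_iff hi' hi).1 hmem with rfl | h
    · simp only [leftEarlier, add_tsub_cancel_right, decide_eq_true_eq] at hs
      exact hs.elim (by omega) fun h ↦ lt_asymm h.2 hlt
    · obtain rfl : i = i' := by omega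
      exact lt_irrefl _ hlt

theorem not_isPathIn_red [Finite V] (hc : IsBlueIfSafeColoring ℓ G R B τ) {k : ℕ}
    (hG : TreeSizeLE G k) (hk : k < ℓ + minWeight (ℓ - 1) ℓ true false 0) (v : ℕ → V) :
    ¬ IsPathIn R v ℓ := by
  intro hv
  have hℓ : ℓ ≠ 0 := by
    rintro rfl
    simp [minWeight] at hk
  have hweight := minWeight_le_sum (ℓ - 1) ℓ (fun j ↦ edgesWithin G (pathBranch G v ℓ j))
    (leftEarlier τ v ℓ)
    (fun i ↦ CompletesPath ℓ B τ s(v i, v (i + 1)))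
    true 0 (fun _ hi ↦ hc.completesPath_or_completesPath hv hi)
    (fun _ hi ↦ hc.exists_demand_le hG.1 hv hi)
    (by simp [leftEarlier]) (by simp) (Nat.zero_le _)
  have hleft : leftEarlier τ v ℓ 0 = false := by simp [leftEarlier, Ne.symm hℓ]
  rw [hleft] at hweight
  have := hG.add_sum_edgesWithin_pathBranch_le (hv.mono hc.red_subset)
  omega

end IsBlueIfSafeColoring

end Coloring

section Game

variable {V : Type} {r : ℕ} (π : PainterStrategy V r)

theorem runPainterAux_append (h : EdgeHistory V r) (l₁ l₂ : List (Sym2 V)) :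
    runPainterAux π h (l₁ ++ l₂) = runPainterAux π (runPainterAux π h l₁) l₂ := by
  induction l₁ generalizing h with
  | nil => rfl
  | cons e l ih => exact ih _

theorem runPainter_concat (l : List (Sym2 V)) (e : Sym2 V) :
    runPainter π (l ++ [e]) = runPainter π l ++ [(e, π (runPainter π l) e)] := by
  rw [runPainter, runPainterAux_append]
  rfl

variable [DecidableEq V] {π} {l : List (Sym2 V)}

theorem mem_runPainter_take_iff (hl : l.Nodup) (t : ℕ) {e : Sym2 V} {c : Fin r} :
    (e, c) ∈ runPainter π (l.take t) ↔
      e ∈ l ∧ l.idxOf e < t ∧ π (runPainter π (l.take (l.idxOf e))) e = c := by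
  induction t with
  | zero => simp [runPainter, runPainterAux]
  | succ t ih =>
    rcases lt_or_ge t l.length with ht | ht
    · have hidx : e = l[t] ↔ e ∈ l ∧ l.idxOf e = t :=
        ⟨by rintro rfl; exact ⟨List.getElem_mem ht, hl.idxOf_getElem t ht⟩,
          fun ⟨_, h⟩ ↦ by simp [← h, List.getElem_idxOf]⟩
      rw [← List.take_concat_get' l t ht, runPainter_concat, List.mem_append, ih,
        List.mem_singleton, Prod.mk.injEq, hidx]
      constructor
      · rintro (⟨he, hlt, h⟩ | ⟨⟨he, rfl⟩, h⟩)
        · exact ⟨he, by omega, h⟩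
        · exact ⟨he, by omega, by simp_all⟩
      · rintro ⟨he, hlt, h⟩
        rcases Nat.lt_succ_iff_lt_or_eq.1 hlt with hlt | rfl
        · exact .inl ⟨he, hlt, h⟩
        · exact .inr ⟨⟨he, rfl⟩, by simp_all [List.getElem_idxOf]⟩
    · have htake : l.take (t + 1) = l.take t := by
        rw [List.take_of_length_le (by omega), List.take_of_length_le ht]
      rw [htake, ih]
      refine and_congr_right fun he ↦ ?_
      have := List.idxOf_lt_length_of_mem he
      constructor <;> rintro ⟨-, h⟩ <;> exact ⟨by omega, h⟩

theorem mem_runPainter_iff (hl : l.Nodup) {e : Sym2 V} {c : Fin r} :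
    (e, c) ∈ runPainter π l ↔ e ∈ l ∧ π (runPainter π (l.take (l.idxOf e))) e = c := by
  rw [← List.take_length (l := l), mem_runPainter_take_iff hl, List.take_length]
  exact and_congr_right fun he ↦ and_iff_right (List.idxOf_lt_length_of_mem he)

theorem mem_runPainter_take_idxOf_iff (hl : l.Nodup) {e e' : Sym2 V} {c : Fin r} :
    (e', c) ∈ runPainter π (l.take (l.idxOf e)) ↔
      (e', c) ∈ runPainter π l ∧ l.idxOf e' < l.idxOf e := by
  rw [mem_runPainter_take_iff hl, mem_runPainter_iff hl]
  tauto

end Game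

theorem blueIfSafeStrategy_eq_one_iff {ℓ n : ℕ} {h : EdgeHistory (Fin n) 2} {e : Sym2 (Fin n)} :
    blueIfSafeStrategy ℓ n h e = 1 ↔
      (∃ e', (e', 0) ∈ h ∧ ∃ v, v ∈ e ∧ v ∈ e') ∧
        ¬ ∃ u, IsPathIn (insert e {e' | (e', 1) ∈ h}) u ℓ := by
  rw [← isCopy_pathGraph_iff, blueIfSafeStrategy]
  split_ifs with hc <;> simp [hc]

theorem isBlueIfSafeColoring_runPainter {ℓ n : ℕ} {l : List (Sym2 (Fin n))}
    (hl : ValidEdgeSeq l) :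
    IsBlueIfSafeColoring ℓ (boardOf l) {e | (e, 0) ∈ runPainter (blueIfSafeStrategy ℓ n) l}
      {e | (e, 1) ∈ runPainter (blueIfSafeStrategy ℓ n) l} l.idxOf := by
  have hmem : ∀ {e c}, (e, c) ∈ runPainter (blueIfSafeStrategy ℓ n) l → e ∈ l :=
    fun he ↦ ((mem_runPainter_iff hl.1).1 he).1
  have hpast : ∀ e (c : Fin 2),
      {e' | (e', c) ∈ runPainter (blueIfSafeStrategy ℓ n) (l.take (l.idxOf e))} =
        {e' | (e', c) ∈ runPainter (blueIfSafeStrategy ℓ n) l ∧ l.idxOf e' < l.idxOf e} :=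
    fun e c ↦ Set.ext fun e' ↦ mem_runPainter_take_idxOf_iff hl.1
  have hboard : ∀ {e c}, (e, c) ∈ runPainter (blueIfSafeStrategy ℓ n) l → e ∈ (boardOf l).edgeSet :=
    fun he ↦ by simpa [boardOf] using ⟨hmem he, hl.2 _ (hmem he)⟩
  refine ⟨fun e ↦ hboard, fun e ↦ hboard, Set.disjoint_left.2 fun e h0 h1 ↦ ?_,
    fun e he e' he' h ↦ ?_, fun e he ↦ ?_⟩
  · have := ((mem_runPainter_iff hl.1).1 h0).2.symm.trans ((mem_runPainter_iff hl.1).1 h1).2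
    exact absurd this (by decide)
  · exact (List.idxOf_inj (by rcases he with he | he <;> exact hmem he)).1 h
  · have hel : e ∈ l := by rcases he with he | he <;> exact hmem he
    change (e, (1 : Fin 2)) ∈ runPainter (blueIfSafeStrategy ℓ n) l ↔ _
    rw [mem_runPainter_iff hl.1, and_iff_right hel, blueIfSafeStrategy_eq_one_iff, hpast e 1]
    simp only [mem_runPainter_take_idxOf_iff hl.1, MeetsEarlier, CompletesPath, and_assoc]
    rfl

theorem blueIfSafeStrategy_avoids (ℓ k n : ℕ) (hk : k < ℓ + minWeight (ℓ - 1) ℓ true false 0) :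
    PainterAvoidsTree (pathGraph (ℓ + 1)) 2 k n (blueIfSafeStrategy ℓ n) := by
  rintro l hl htree ⟨c, hcopy⟩
  have hc := isBlueIfSafeColoring_runPainter (ℓ := ℓ) hl
  have hG : TreeSizeLE (boardOf l) k := by simpa using htree l.length
  obtain ⟨u, hu⟩ := isCopy_pathGraph_iff.1 hcopy
  fin_cases c
  · exact hc.not_isPathIn_red hG hk u hu
  · refine hc.not_isPathIn_blue ?_ u hu
    rintro rfl
    simp [minWeight] at hk

/-- Painter has a winning strategy in the deterministic `P_8`-avoidance
game with 2 colors and tree size restriction 38 — namely the strategy that colors an edge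
blue iff it is adjacent to a red edge and does not complete a blue `P_8` — and consequently
every tree size restriction for which Builder wins is at least 39, i.e. `k*(P_8,2) ≥ 39`. -/
theorem statement13 :
    (∀ n : ℕ, PainterAvoidsTree (SimpleGraph.pathGraph 9) 2 38 n (blueIfSafeStrategy 8 n)) ∧
    PainterWinsTree (SimpleGraph.pathGraph 9) 2 38 ∧
    (∀ k : ℕ, BuilderWinsTree (SimpleGraph.pathGraph 9) 2 k → 39 ≤ k) := by
  have avoids : ∀ k < 39, ∀ n,
      PainterAvoidsTree (pathGraph 9) 2 k n (blueIfSafeStrategy 8 n) := fun k hk n ↦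
    blueIfSafeStrategy_avoids 8 k n (by rw [show 8 - 1 = 7 from rfl, minWeight_path8]; omega)
  refine ⟨avoids 38 (by norm_num), fun a ↦ ⟨_, avoids 38 (by norm_num) a⟩, fun k ⟨a, hwin⟩ ↦ ?_⟩
  by_contra! hk
  obtain ⟨l, hl, htree, hmono⟩ := hwin (blueIfSafeStrategy 8 a)
  exact avoids k hk a l hl htree hmono
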